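/- Let b, P, θ be real numbers, let θmax > 0 with |θ| ≤ θmax, let b_min ≤ b_max be real numbers, let δ ∈ {0, 1}, and let M ≥ θmax·(b_max - b_min) with M ≥ 0. Then the following are equivalent: (i) there exists b_V ∈ [b_min, b_max] such that P = (b + δ·b_V)·θ; (ii) there exist real numbers w, z and y ∈ {0, 1} such that P = b·θ + w, the linearization constraints hold (-δ·θmax ≤ z ≤ δ·θmax and θ - (1-δ)·θmax ≤ z ≤ θ + (1-δ)·θmax), and the big-M constraints hold (-M·y + z·b_min ≤ w ≤ z·b_max + M·y and -M·(1-y) + z·b_max ≤ w ≤ z·b_min + M·(1-y)). -/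
import Mathlib


/-- Exactness of the MILP reformulation of the TCSC power-flow constraint
P = (b + δ·b_V)·θ with b_V ∈ [b_min, b_max], binary δ, |θ| ≤ θmax. -/
theorem stmt_7 (b P θ θmax bmin bmax δ M : ℝ)
    (hθmax : 0 < θmax) (hθ : |θ| ≤ θmax) (hb : bmin ≤ bmax)
    (hδ : δ = 0 ∨ δ = 1) (hM1 : θmax * (bmax - bmin) ≤ M) (hM0 : 0 ≤ M) :
    (∃ bV ∈ Set.Icc bmin bmax, P = (b + δ * bV) * θ) ↔
    (∃ w z y : ℝ, (y = 0 ∨ y = 1) ∧ P = b * θ + w ∧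
      (-(δ * θmax) ≤ z ∧ z ≤ δ * θmax) ∧
      (θ - (1 - δ) * θmax ≤ z ∧ z ≤ θ + (1 - δ) * θmax) ∧
      (-(M * y) + z * bmin ≤ w ∧ w ≤ z * bmax + M * y) ∧
      (-(M * (1 - y)) + z * bmax ≤ w ∧ w ≤ z * bmin + M * (1 - y))) := by
  obtain ⟨hθ1, hθ2⟩ := abs_le.mp hθ
  constructor
  · rintro ⟨bV, ⟨h1, h2⟩, hP⟩
    rcases hδ with rfl | rfl
    · refine ⟨0, 0, 0, Or.inl rfl, ?_, ⟨?_, ?_⟩, ⟨?_, ?_⟩, ⟨?_, ?_⟩, ⟨?_, ?_⟩⟩ <;> nlinarith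
    · rcases le_or_gt 0 θ with hs | hs
      · refine ⟨bV * θ, θ, 0, Or.inl rfl, ?_, ⟨?_, ?_⟩, ⟨?_, ?_⟩, ⟨?_, ?_⟩, ⟨?_, ?_⟩⟩ <;> nlinarith
      · refine ⟨bV * θ, θ, 1, Or.inr rfl, ?_, ⟨?_, ?_⟩, ⟨?_, ?_⟩, ⟨?_, ?_⟩, ⟨?_, ?_⟩⟩ <;> nlinarith
  · rintro ⟨w, z, y, hy, hP, ⟨hz1, hz2⟩, ⟨hz3, hz4⟩, ⟨hw1, hw2⟩, ⟨hw3, hw4⟩⟩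
    rcases hδ with rfl | rfl
    · have hz : z = 0 := by
        simp only [zero_mul, neg_zero] at hz1 hz2; linarith
      subst hz
      have hw : w = 0 := by
        rcases hy with rfl | rfl <;> simp only [zero_mul, mul_zero, mul_one, sub_zero,
          sub_self, neg_zero, zero_add, add_zero] at hw1 hw2 hw3 hw4 <;> linarith
      exact ⟨bmin, ⟨le_refl _, hb⟩, by rw [hP, hw]; ring⟩
    · have hz : z = θ := by
        simp only [sub_self, zero_mul, sub_zero, add_zero] at hz3 hz4; linarith
      rw [hz] at hw1 hw2 hw3 hw4
      rcases eq_or_ne θ 0 with hθ0 | hθ0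
      · have hw : w = 0 := by
          rcases hy with rfl | rfl <;> rw [hθ0] at hw1 hw2 hw3 hw4 <;>
            simp only [zero_mul, mul_zero, mul_one, sub_self, neg_zero, zero_add,
              add_zero, sub_zero] at hw1 hw2 hw3 hw4 <;> linarith
        exact ⟨bmin, ⟨le_refl _, hb⟩, by rw [hP, hw, hθ0]; ring⟩
      · refine ⟨w / θ, ⟨?_, ?_⟩, by rw [hP]; field_simp⟩
        · rcases lt_or_gt_of_ne hθ0 with hs | hs
          · rw [le_div_iff_of_neg hs]
            rcases hy with rfl | rfl <;>
              linarith [mul_le_mul_of_nonpos_right hb hs.le]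
          · rw [le_div_iff₀ hs]
            rcases hy with rfl | rfl <;>
              linarith [mul_le_mul_of_nonneg_right hb hs.le]
        · rcases lt_or_gt_of_ne hθ0 with hs | hs
          · rw [div_le_iff_of_neg hs]
            rcases hy with rfl | rfl <;>
              linarith [mul_le_mul_of_nonpos_right hb hs.le]
          · rw [div_le_iff₀ hs]
            rcases hy with rfl | rfl <;>
              linarith [mul_le_mul_of_nonneg_right hb hs.le]
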